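/- Overspecified fixed point under conservative repair: let B : ℕ → Prop be the property B(e) ↔ ∃ x, v_bw(x, f_e(x)) > 0, assumed extensional (f_e = f_{e'} pointwise implies B(e) ↔ B(e')). Suppose the non-triviality witnesses exist (x₀, s₀, y⁺, # with s₀ ∈ S(x₀#ⁿ)\W(x₀#ⁿ) for all n, V(y⁺,s₀)=1, V(y⁺,s) ≥ 0, V(ε,s)=0), and let Φ : ℕ → ℕ be any total computable function that is conservative, i.e., ¬B(e) implies Φ(e) = e. Then there exists e* with Φ(e*) = e* and B(e*). -/

import Mathlib

/-
Diagonalise against the repair map: by s-m-n and Kleene's recursion theorem there is an index `e`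
whose pipeline outputs `y⁺` if `Φ e = e` and the empty output `ε` otherwise. If `Φ` moved `e`, the
pipeline would always output `ε`, which scores `0` everywhere, so `e` is not overspecified and
conservativity forces `Φ e = e`, a contradiction. Hence `Φ e = e`, and then the pipeline outputs
`y⁺`, which scores at least `V y⁺ s₀ = 1` on the padded instance.
-/

variable {A : Type*} [Primcodable A] [DecidableEq A]

/-- Beyond-warrant overspecification score. -/
def vbw (S W : List A → Finset (List A)) (V : List A → List A → ℤ)
    (x y : List A) : ℤ :=
  ∑ s ∈ S x \ W x, V y s

/-- Padded instance family `x₀ #ⁿ`. -/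
def pad (x₀ : List A) (hash : A) (n : ℕ) : List A :=
  x₀ ++ List.replicate n hash

theorem Computable₂.ite_isFixedPt {α β : Type*} [Primcodable α] [Primcodable β]
    {Φ : ℕ → ℕ} (hΦ : Computable Φ) (y z : β) :
    Computable₂ fun m (_ : α) => if Φ m = m then y else z := by
  have hfix : Computable fun m : ℕ => decide (Φ m = m) :=
    Primrec.eq.decide.to_comp.comp hΦ Computable.id
  refine (Computable.cond (hfix.comp Computable.fst) (Computable.const y)
    (Computable.const z)).of_eq fun ⟨m, _⟩ => ?_
  by_cases h : Φ m = m <;> simp [h]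

theorem exists_index_eq_ite_isFixedPt {α β : Type*} [Primcodable α] [Primcodable β]
    (fe : ℕ → α → β)
    (hsmn : ∀ F : ℕ → α → β, Computable₂ F →
      ∃ r : ℕ → ℕ, Computable r ∧ ∀ m x, fe (r m) x = F m x)
    (hkleene : ∀ G : ℕ → ℕ, Computable G → ∃ e, ∀ x, fe e x = fe (G e) x)
    {Φ : ℕ → ℕ} (hΦ : Computable Φ) (y z : β) :
    ∃ e, ∀ x, fe e x = if Φ e = e then y else z := by
  obtain ⟨r, hr, hre⟩ := hsmn _ (Computable₂.ite_isFixedPt (α := α) hΦ y z)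
  obtain ⟨e, he⟩ := hkleene r hr
  exact ⟨e, fun x => (he x).trans (hre e x)⟩

theorem vbw_nil {α : Type*} [DecidableEq α] {S W : List α → Finset (List α)}
    {V : List α → List α → ℤ} (heps : ∀ s, V [] s = 0) (x : List α) :
    vbw S W V x [] = 0 :=
  Finset.sum_eq_zero fun s _ => heps s

theorem vbw_pos_of_mem {α : Type*} [DecidableEq α] {S W : List α → Finset (List α)}
    {V : List α → List α → ℤ} {x y s₀ : List α} (hs₀ : s₀ ∈ S x \ W x)
    (hV : 0 < V y s₀) (hnonneg : ∀ s, 0 ≤ V y s) :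
    0 < vbw S W V x y :=
  hV.trans_le (Finset.single_le_sum (fun s _ => hnonneg s) hs₀)

theorem stmt_17_general (S W : List A → Finset (List A)) (V : List A → List A → ℤ)
    (x₀ s₀ yplus : List A) (hash : A)
    (hwit : ∀ n, s₀ ∈ S (pad x₀ hash n) \ W (pad x₀ hash n))
    (hone : V yplus s₀ = 1)
    (hpos : ∀ s, 0 ≤ V yplus s)
    (heps : ∀ s, V [] s = 0)
    -- an effective enumeration of (total computable) pipelines:
    (fe : ℕ → List A → List A)
    -- s-m-n for the enumeration:
    (hsmn : ∀ F : ℕ → List A → List A, Computable₂ F →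
      ∃ r : ℕ → ℕ, Computable r ∧ ∀ m x, fe (r m) x = F m x)
    -- Kleene recursion for the enumeration:
    (hkleene : ∀ G : ℕ → ℕ, Computable G → ∃ e, ∀ x, fe e x = fe (G e) x)
    (Φ : ℕ → ℕ) (hΦ : Computable Φ)
    (hcons : ∀ e, ¬ (∃ x, 0 < vbw S W V x (fe e x)) → Φ e = e) :
    ∃ e, Φ e = e ∧ ∃ x, 0 < vbw S W V x (fe e x) := by
  obtain ⟨e, he⟩ := exists_index_eq_ite_isFixedPt fe hsmn hkleene hΦ yplus []
  by_cases hfix : Φ e = e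
  · refine ⟨e, hfix, pad x₀ hash 0, ?_⟩
    rw [he, if_pos hfix]
    exact vbw_pos_of_mem (hwit 0) (hone ▸ one_pos) hpos
  · refine absurd (hcons e ?_) hfix
    rintro ⟨x, hx⟩
    rw [he, if_neg hfix, vbw_nil heps] at hx
    exact hx.false

theorem stmt_17 (S W : List A → Finset (List A)) (V : List A → List A → ℤ)
    (hW : ∀ x, W x ⊆ S x)
    (hV : ∀ y s, V y s = -1 ∨ V y s = 0 ∨ V y s = 1)
    (x₀ s₀ yplus : List A) (hash : A)
    (hwit : ∀ n, s₀ ∈ S (pad x₀ hash n) \ W (pad x₀ hash n))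
    (hone : V yplus s₀ = 1)
    (hpos : ∀ s, 0 ≤ V yplus s)
    (heps : ∀ s, V [] s = 0)
    -- an effective enumeration of (total computable) pipelines:
    (fe : ℕ → List A → List A)
    -- s-m-n for the enumeration:
    (hsmn : ∀ F : ℕ → List A → List A, Computable₂ F →
      ∃ r : ℕ → ℕ, Computable r ∧ ∀ m x, fe (r m) x = F m x)
    -- Kleene recursion for the enumeration:
    (hkleene : ∀ G : ℕ → ℕ, Computable G → ∃ e, ∀ x, fe e x = fe (G e) x)
    -- extensionality of the overspecification predicate (automatic here):
    (hext : ∀ e e', (∀ x, fe e x = fe e' x) →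
      ((∃ x, 0 < vbw S W V x (fe e x)) ↔ ∃ x, 0 < vbw S W V x (fe e' x)))
    (Φ : ℕ → ℕ) (hΦ : Computable Φ)
    (hcons : ∀ e, ¬ (∃ x, 0 < vbw S W V x (fe e x)) → Φ e = e) :
    ∃ e, Φ e = e ∧ ∃ x, 0 < vbw S W V x (fe e x) :=
  stmt_17_general S W V x₀ s₀ yplus hash hwit hone hpos heps fe hsmn hkleene Φ hΦ hcons
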